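/- arXiv:2004.02227 — 2 statements merged into one kernel-verified Lean document; each statement's English description precedes it below -/
import Mathlib

section
/- Let P be a simple polygon, let Π be a connected curve contained in P that intersects every nonredundant cut of P, and let C be a cut of P (possibly redundant). If Pocket(C) contains the pocket of some nonredundant cut of P and there exists a nonredundant cut whose pocket is disjoint from Pocket(C), then Π intersects C. -/
open Set

noncomputable section

/-- The Euclidean plane. -/
abbrev E2 := EuclideanSpace ℝ (Fin 2)

/-- A simple polygon in the plane, given by its cyclic sequence of vertices.
Adjacent edges meet exactly at their common vertex, and non-adjacent edges
are disjoint, so the boundary is a simple closed polygonal curve. -/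
structure SimplePolygon where
  n : ℕ
  three_le : 3 ≤ n
  vtx : ZMod n → E2
  inj : Function.Injective vtx
  adj_edges : ∀ i : ZMod n,
    segment ℝ (vtx i) (vtx (i + 1)) ∩ segment ℝ (vtx (i + 1)) (vtx (i + 2)) = {vtx (i + 1)}
  nonadj_edges : ∀ i j : ZMod n, i ≠ j → i + 1 ≠ j → j + 1 ≠ i →
    segment ℝ (vtx i) (vtx (i + 1)) ∩ segment ℝ (vtx j) (vtx (j + 1)) = ∅

namespace SimplePolygon

variable (P : SimplePolygon)

/-- The boundary `∂P`: the union of the edges. -/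
def boundary : Set E2 := ⋃ i : ZMod P.n, segment ℝ (P.vtx i) (P.vtx (i + 1))

/-- The compact region bounded by `∂P`: the boundary together with all points of the
bounded connected components of its complement. -/
def region : Set E2 :=
  P.boundary ∪ {x | x ∉ P.boundary ∧ Bornology.IsBounded (connectedComponentIn P.boundaryᶜ x)}

/-- `x` sees `y` (in `P`) if the closed segment `[x,y]` is contained in `P`. -/
def Visible (x y : E2) : Prop := segment ℝ x y ⊆ P.region

/-- The vertex `vtx i` is reflex: its internal angle is strictly larger than `π`, i.e.
near the vertex the midpoint of two points at equal small parameter along the two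
incident edges lies outside the region. -/
def IsReflex (i : ZMod P.n) : Prop :=
  ∃ ε₀ > (0 : ℝ), ∀ ε ∈ Set.Ioo (0 : ℝ) ε₀,
    midpoint ℝ (P.vtx i + ε • (P.vtx (i - 1) - P.vtx i))
               (P.vtx i + ε • (P.vtx (i + 1) - P.vtx i)) ∉ P.region

/-- `P` is star-shaped if a single point of `P` sees all of `P`. -/
def IsStarShaped : Prop := ∃ x ∈ P.region, ∀ y ∈ P.region, P.Visible x y

/-- A visibility path: a connected curve inside `P` from which every point of `P`
is visible. -/
def IsVisibilityPath (Pth : Set E2) : Prop :=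
  IsConnected Pth ∧ Pth ⊆ P.region ∧ ∀ x ∈ P.region, ∃ p ∈ Pth, P.Visible x p

/-- The pocket, inside `P`, determined by a cut segment `s` on the side of the point `u`:
the closure of the connected component of `P \ s` containing `u`, together with `s`. -/
def pocketOfSeg (s : Set E2) (u : E2) : Set E2 :=
  closure (connectedComponentIn (P.region \ s) u) ∪ s

end SimplePolygon

/-- A cut of a simple polygon `P`: for a reflex vertex `v = vtx i` with adjacent
vertex `u = vtx j`, the segment from `v` to the closest point `w` of `∂P` hit by
the ray from `v` in the direction from `u` to `v`. -/
structure SimplePolygon.Cut (P : SimplePolygon) where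
  i : ZMod P.n
  j : ZMod P.n
  adj : j = i + 1 ∨ j = i - 1
  reflex : P.IsReflex i
  t : ℝ
  t_pos : 0 < t
  hits : P.vtx i + t • (P.vtx i - P.vtx j) ∈ P.boundary
  first_hit : ∀ s ∈ Set.Ioo (0 : ℝ) t, P.vtx i + s • (P.vtx i - P.vtx j) ∉ P.boundary
  inside : segment ℝ (P.vtx i) (P.vtx i + t • (P.vtx i - P.vtx j)) ⊆ P.region

namespace SimplePolygon.Cut

variable {P : SimplePolygon} (C : P.Cut)

/-- The reflex vertex generating the cut. -/
def v : E2 := P.vtx C.i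

/-- The adjacent vertex `u`; the edge `u v` is the generator of the cut. -/
def u : E2 := P.vtx C.j

/-- The other endpoint of the cut, on `∂P`. -/
def w : E2 := P.vtx C.i + C.t • (P.vtx C.i - P.vtx C.j)

/-- The cut as a segment. -/
def seg : Set E2 := segment ℝ C.v C.w

/-- `Pocket(C)`: the part of `P` cut off by `C` that contains the generator vertex `u`. -/
def pocket : Set E2 := P.pocketOfSeg C.seg C.u

/-- A cut is redundant if the pocket of some cut is strictly contained in its pocket. -/
def Redundant : Prop := ∃ C' : P.Cut, C'.pocket ⊂ C.pocket

/-- A nonredundant (essential) cut. -/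
def Nonredundant : Prop := ¬ C.Redundant

/-- `x` is a vertex of the polygon `Pocket(C)`: either the endpoint `w` of the cut, or a
vertex of `P` belonging to the pocket. -/
def PocketVertex (x : E2) : Prop :=
  x = C.w ∨ ∃ k : ZMod P.n, P.vtx k = x ∧ x ∈ C.pocket

end SimplePolygon.Cut

/-- Length of a polygonal path given by its list of vertices. -/
def polyLength (l : List E2) : ℝ := ((l.zip l.tail).map fun p => dist p.1 p.2).sum

namespace SimplePolygon

variable (P : SimplePolygon)

/-- A polygonal path inside `P`: a nonempty list of points with each consecutive
segment contained in `P`. -/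
def IsPolyPathIn (l : List E2) : Prop :=
  l ≠ [] ∧ List.Chain' (fun a b => segment ℝ a b ⊆ P.region) l

/-- `l` is a shortest Euclidean (polygonal) path inside `P` from `x` to the set `S`. -/
def IsGeodesicTo (x : E2) (S : Set E2) (l : List E2) : Prop :=
  P.IsPolyPathIn l ∧ l.head? = some x ∧ (∃ y ∈ S, l.getLast? = some y) ∧
  ∀ m : List E2, P.IsPolyPathIn m → m.head? = some x →
    (∃ y ∈ S, m.getLast? = some y) → polyLength l ≤ polyLength m

/-- The subpolygon `Q` of `P` obtained by cutting `P` along all nonredundant cuts: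
the closure of `P` minus the union of the pockets of all nonredundant cuts. -/
def core : Set E2 :=
  closure (P.region \ ⋃ C : {C : P.Cut // C.Nonredundant}, (C : P.Cut).pocket)

end SimplePolygon

/-- The planar cross product. -/
def cross2 (a b : E2) : ℝ := a 0 * b 1 - a 1 * b 0

/-- A polygonal chain all of whose turns have the sign `s` (a convex chain bending
consistently to one side). -/
def ConvexChain (s : ℝ) (l : List E2) : Prop :=
  ∀ p q r : E2, [p, q, r] <:+: l → 0 ≤ s * cross2 (q - p) (r - q)

/-- Let `Pth` be a connected curve inside `P` intersecting every
nonredundant cut, and let `C` be any cut of `P` such that `Pocket(C)` contains the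
pocket of some nonredundant cut while some other nonredundant cut has pocket disjoint
from `Pocket(C)`.  Then `Pth` crosses the segment `C`. -/
theorem path_crosses_redundant_cut
    (P : SimplePolygon) (Pth : Set E2) (hsub : Pth ⊆ P.region) (hconn : IsConnected Pth)
    (hcuts : ∀ C : P.Cut, C.Nonredundant → (Pth ∩ C.seg).Nonempty)
    (C : P.Cut)
    (hin : ∃ C₁ : P.Cut, C₁.Nonredundant ∧ C₁.pocket ⊆ C.pocket)
    (hout : ∃ C₂ : P.Cut, C₂.Nonredundant ∧ Disjoint C₂.pocket C.pocket) :
    (Pth ∩ C.seg).Nonempty := by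
  by_contra hempty
  rw [Set.not_nonempty_iff_eq_empty] at hempty
  obtain ⟨C₁, hC₁n, hC₁⟩ := hin
  obtain ⟨C₂, hC₂n, hC₂⟩ := hout
  obtain ⟨p₁, hp₁Pth, hp₁s⟩ := hcuts C₁ hC₁n
  obtain ⟨p₂, hp₂Pth, hp₂s⟩ := hcuts C₂ hC₂n
  -- p₁ is in C.pocket
  have hp₁pocket : p₁ ∈ C.pocket := hC₁ (Set.mem_union_right _ hp₁s)
  -- p₂ is not in C.pocket
  have hp₂pocket : p₂ ∉ C.pocket := fun h =>
    Set.disjoint_left.mp hC₂ (Set.mem_union_right _ hp₂s) h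
  -- Pth is disjoint from C.seg
  have hPthF : Pth ⊆ P.region \ C.seg := fun x hx =>
    ⟨hsub hx, fun hxs => Set.eq_empty_iff_forall_notMem.mp hempty x ⟨hx, hxs⟩⟩
  set F : Set E2 := P.region \ C.seg with hF
  have hp₁F : p₁ ∈ F := hPthF hp₁Pth
  set K : Set E2 := connectedComponentIn F C.u with hK
  have hp₁K : p₁ ∈ closure K := by
    rcases hp₁pocket with h | h
    · exact h
    · exact absurd h hp₁F.2
  by_cases hu : C.u ∈ F
  · -- S = closure K ∩ F is preconnected and contains both u and p₁
    have hKS : K ⊆ closure K ∩ F :=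
      Set.subset_inter subset_closure (connectedComponentIn_subset F C.u)
    have hSpre : IsPreconnected (closure K ∩ F) :=
      (isPreconnected_connectedComponentIn).subset_closure hKS
        (Set.inter_subset_left)
    have huS : C.u ∈ closure K ∩ F := hKS (mem_connectedComponentIn hu)
    have hSK : closure K ∩ F ⊆ K :=
      hSpre.subset_connectedComponentIn huS (Set.inter_subset_right)
    have hp₁K' : p₁ ∈ K := hSK ⟨hp₁K, hp₁F⟩
    have : Pth ⊆ connectedComponentIn F p₁ :=
      hconn.isPreconnected.subset_connectedComponentIn hp₁Pth hPthF
    have hPthK : Pth ⊆ K := by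
      rw [hK]; exact this.trans (connectedComponentIn_eq hp₁K').symm.subset
    exact hp₂pocket (Set.mem_union_left _ (subset_closure (hPthK hp₂Pth)))
  · have : K = ∅ := connectedComponentIn_eq_empty hu
    rw [this, closure_empty] at hp₁K
    exact hp₁K
end
end

section
/- Let P be a simple polygon, Π a connected curve contained in P intersecting every nonredundant cut of P, Q the subpolygon of P obtained by cutting P along all nonredundant cuts, and v_i a reflex vertex of Q with adjacent vertex t_{ij} and associated cut l_{ij} of Q generated by the edge t_{ij}v_i. If l_{ij} does not intersect any nonredundant cut of P and there exist nonredundant cuts of P whose pockets lie inside Pocket(l_{ij}) as well as a nonredundant cut of P whose pocket does not lie inside Pocket(l_{ij}), then Π intersects the segment l_{ij}. -/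
open Set

noncomputable section

/-!
Suppose `Pth` misses the cut `C'` of `Q`, and let `K` be the component of `P \ C'` containing the
generator vertex of `C'`. The path meets the cut of a nonredundant pocket lying in `Pocket(C')`, so
`Pth ⊆ K`; hence the cut of a nonredundant pocket `Pocket(C)` not lying in `Pocket(C')`, which
`Pth` also meets and which misses `C'`, lies in `K` as well.

A point of `P` that is not a vertex sees every nearby point of `P` (near an edge the boundary is
locally a straight line). Consequently no non-vertex point of `Q` lies in the open pocket of a
nonredundant cut. Since `C' ⊆ Q` is connected and infinite, the open pocket of `C` misses `C'`;
it is attached to `K` at the reflex vertex of `C`, so `Pocket(C) ⊆ Pocket(C')`, a contradiction.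
-/

open Bornology Filter Topology

section General

theorem IsPreconnected.subset_connectedComponentIn_of_mem {X : Type*} [TopologicalSpace X]
    {T F : Set X} {x y : X} (hT : IsPreconnected T) (hxT : x ∈ T) (hTF : T ⊆ F)
    (hx : x ∈ _root_.connectedComponentIn F y) : T ⊆ _root_.connectedComponentIn F y :=
  connectedComponentIn_eq hx ▸ hT.subset_connectedComponentIn hxT hTF

theorem IsPreconnected.insert_of_mem_closure {X : Type*} [TopologicalSpace X] {T : Set X}
    {x : X} (hT : IsPreconnected T) (hx : x ∈ closure T) : IsPreconnected (insert x T) :=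
  hT.subset_closure (subset_insert _ _) (insert_subset hx subset_closure)

theorem mem_connectedComponentIn_of_mem_closure {X : Type*} [TopologicalSpace X]
    {F : Set X} {x y : X} (hx : x ∈ F) (hcl : x ∈ closure (connectedComponentIn F y)) :
    x ∈ connectedComponentIn F y := by
  have hy : y ∈ F := connectedComponentIn_nonempty_iff.mp (closure_nonempty_iff.mp ⟨x, hcl⟩)
  exact (isPreconnected_connectedComponentIn.insert_of_mem_closure hcl)
    |>.subset_connectedComponentIn_of_mem (mem_insert_of_mem _ (mem_connectedComponentIn hy))
      (insert_subset hx (connectedComponentIn_subset _ _)) (mem_connectedComponentIn hy)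
      (mem_insert _ _)

variable {E : Type*} [NormedAddCommGroup E] [NormedSpace ℝ E]

theorem isClosed_segment (x y : E) : IsClosed (segment ℝ x y) := by
  rw [← closure_openSegment]
  exact isClosed_closure

theorem openSegment_subset_segment_diff_right {x y : E} (hxy : x ≠ y) :
    openSegment ℝ x y ⊆ segment ℝ x y \ {y} := fun _ hp =>
  ⟨openSegment_subset_segment _ _ _ hp, fun h => hxy (right_mem_openSegment_iff.mp (h ▸ hp))⟩

theorem isPreconnected_segment_diff_right (x y : E) : IsPreconnected (segment ℝ x y \ {y}) := by
  rcases eq_or_ne x y with rfl | hxy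
  · simp [isPreconnected_empty]
  exact (convex_openSegment x y).isPreconnected.subset_closure
    (openSegment_subset_segment_diff_right hxy)
    (sdiff_subset.trans segment_subset_closure_openSegment)

theorem segment_subset_closure_segment_diff_right {x y : E} (hxy : x ≠ y) :
    segment ℝ x y ⊆ closure (segment ℝ x y \ {y}) :=
  segment_subset_closure_openSegment.trans
    (closure_mono (openSegment_subset_segment_diff_right hxy))

theorem segment_infinite {x y : E} (hxy : x ≠ y) : (segment ℝ x y).Infinite := by
  rw [segment_eq_image_lineMap]
  exact (Icc_infinite zero_lt_one).image (AffineMap.lineMap_injective ℝ hxy).injOn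

theorem mem_segment_of_mem_affineSpan_pair {a b y z : E} (hz : z ∈ segment ℝ a b)
    (hy : y ∈ line[ℝ, a, b]) (hya : dist y z < dist z a) (hyb : dist y z < dist z b) :
    y ∈ segment ℝ a b := by
  rw [segment_eq_image_lineMap] at hz ⊢
  obtain ⟨θ, ⟨hθ0, hθ1⟩, rfl⟩ := hz
  obtain ⟨r, rfl⟩ := mem_affineSpan_pair_iff_exists_lineMap_eq.mp hy
  rw [dist_lineMap_lineMap, dist_lineMap_left] at hya
  rw [dist_lineMap_lineMap, dist_lineMap_right] at hyb
  have hab : 0 < dist a b :=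
    pos_of_mul_pos_right ((by positivity : (0 : ℝ) ≤ _).trans_lt hya) (norm_nonneg θ)
  simp only [mul_lt_mul_iff_left₀ hab, Real.dist_eq, Real.norm_eq_abs, abs_of_nonneg hθ0,
    abs_of_nonneg (sub_nonneg.mpr hθ1), abs_lt] at hya hyb
  exact ⟨r, ⟨by linarith, by linarith⟩, rfl⟩

end General

namespace SimplePolygon

variable (P : SimplePolygon)

instance : NeZero P.n := ⟨by have := P.three_le; omega⟩

theorem one_ne_zero : (1 : ZMod P.n) ≠ 0 := by
  have : Fact (1 < P.n) := ⟨by have := P.three_le; omega⟩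
  exact _root_.one_ne_zero

def edge (i : ZMod P.n) : Set E2 := segment ℝ (P.vtx i) (P.vtx (i + 1))

theorem edge_subset_boundary (i : ZMod P.n) : P.edge i ⊆ P.boundary :=
  subset_iUnion P.edge i

theorem mem_boundary_iff {x : E2} : x ∈ P.boundary ↔ ∃ i, x ∈ P.edge i := mem_iUnion

theorem edge_inter_edge_add_one (i : ZMod P.n) : P.edge i ∩ P.edge (i + 1) = {P.vtx (i + 1)} := by
  have h := P.adj_edges i
  rwa [show i + 2 = i + 1 + 1 by ring] at h

theorem eq_of_mem_edge_of_mem_edge {z : E2} {k l : ZMod P.n} (hk : z ∈ P.edge k)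
    (hl : z ∈ P.edge l) (hz : z ∉ range P.vtx) : k = l := by
  by_contra hkl
  by_cases hlk : l = k + 1
  · subst hlk
    exact hz ⟨k + 1, ((P.edge_inter_edge_add_one k).subset ⟨hk, hl⟩).symm⟩
  by_cases hkl' : k = l + 1
  · subst hkl'
    exact hz ⟨l + 1, ((P.edge_inter_edge_add_one l).subset ⟨hl, hk⟩).symm⟩
  exact (P.nonadj_edges k l hkl (Ne.symm hlk) (Ne.symm hkl')).subset ⟨hk, hl⟩

theorem isClosed_boundary : IsClosed P.boundary :=
  isClosed_iUnion_of_finite fun _ => isClosed_segment _ _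

theorem boundary_subset_region : P.boundary ⊆ P.region := subset_union_left

theorem mem_region_iff_of_notMem_boundary {x : E2} (hx : x ∉ P.boundary) :
    x ∈ P.region ↔ IsBounded (connectedComponentIn P.boundaryᶜ x) := by
  simp [region, hx]

theorem subset_region_of_isPreconnected {T : Set E2} {x : E2} (hT : IsPreconnected T)
    (hTb : T ⊆ P.boundaryᶜ) (hx : x ∈ T) (hxr : x ∈ P.region) : T ⊆ P.region := by
  intro y hy
  rw [P.mem_region_iff_of_notMem_boundary (hTb hy),
    ← connectedComponentIn_eq (hT.subset_connectedComponentIn hx hTb hy)]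
  exact (P.mem_region_iff_of_notMem_boundary (hTb hx)).mp hxr

theorem isClosed_region : IsClosed P.region := by
  rw [← isOpen_compl_iff, isOpen_iff_forall_mem_open]
  intro x hx
  have hxb : x ∉ P.boundary := fun h => hx (P.boundary_subset_region h)
  refine ⟨connectedComponentIn P.boundaryᶜ x, fun y hy hyr => hx ?_,
    P.isClosed_boundary.isOpen_compl.connectedComponentIn, mem_connectedComponentIn hxb⟩
  exact P.subset_region_of_isPreconnected isPreconnected_connectedComponentIn
    (connectedComponentIn_subset _ _) hy hyr (mem_connectedComponentIn hxb)

theorem isOpen_region_diff_boundary : IsOpen (P.region \ P.boundary) := by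
  rw [isOpen_iff_forall_mem_open]
  rintro x ⟨hxr, hxb⟩
  refine ⟨connectedComponentIn P.boundaryᶜ x,
    fun y hy => ⟨?_, connectedComponentIn_subset _ _ hy⟩,
    P.isClosed_boundary.isOpen_compl.connectedComponentIn, mem_connectedComponentIn hxb⟩
  exact P.subset_region_of_isPreconnected isPreconnected_connectedComponentIn
    (connectedComponentIn_subset _ _) (mem_connectedComponentIn hxb) hxr hy

theorem core_subset_region : P.core ⊆ P.region :=
  closure_minimal sdiff_subset P.isClosed_region

theorem segment_subset_region {y z : E2} (hy : y ∈ P.region)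
    (h : ∀ x ∈ segment ℝ y z, x ≠ z → x ∉ P.boundary) :
    segment ℝ y z ⊆ P.region := by
  rcases eq_or_ne y z with rfl | hyz
  · simpa [segment_same] using hy
  have hT : segment ℝ y z \ {z} ⊆ P.region :=
    P.subset_region_of_isPreconnected (isPreconnected_segment_diff_right y z)
      (fun x hx => h x hx.1 hx.2) ⟨left_mem_segment _ _ _, hyz⟩ hy
  exact (segment_subset_closure_segment_diff_right hyz).trans (closure_minimal hT P.isClosed_region)

theorem eventually_mem_edge_of_mem_boundary {z : E2} {k : ZMod P.n} (hz : z ∈ P.edge k)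
    (hzv : z ∉ range P.vtx) : ∀ᶠ y in 𝓝 z, y ∈ P.boundary → y ∈ P.edge k := by
  have hother : ∀ l, ∀ᶠ y in 𝓝 z, l ≠ k → y ∉ P.edge l := fun l => by
    by_cases hl : l = k
    · exact Eventually.of_forall fun _ h => absurd hl h
    · filter_upwards [(isClosed_segment _ _).isOpen_compl.mem_nhds
        fun h => hl (P.eq_of_mem_edge_of_mem_edge h hz hzv)] with y hy _ using hy
  filter_upwards [eventually_all.mpr hother] with y hy hyb
  obtain ⟨l, hl⟩ := P.mem_boundary_iff.mp hyb
  by_contra hyk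
  exact hy l (fun h => hyk (h ▸ hl)) hl

/-- Near `z` the boundary is the edge; a point `y` off the boundary is then off the line of
the edge, so the half-open segment `[y, z)` misses the boundary. -/
theorem eventually_segment_subset_region_of_mem_edge {z : E2} {k : ZMod P.n}
    (hz : z ∈ P.edge k) (hzv : z ∉ range P.vtx) :
    ∀ᶠ y in 𝓝 z, y ∈ P.region → segment ℝ y z ⊆ P.region := by
  have ha : 0 < dist z (P.vtx k) := dist_pos.mpr fun h => hzv ⟨k, h.symm⟩
  have hb : 0 < dist z (P.vtx (k + 1)) := dist_pos.mpr fun h => hzv ⟨k + 1, h.symm⟩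
  obtain ⟨ε, hε, hball⟩ :=
    Metric.mem_nhds_iff.mp (P.eventually_mem_edge_of_mem_boundary hz hzv)
  filter_upwards [Metric.ball_mem_nhds z (lt_min hε (lt_min ha hb))] with y hy hyr
  have hyz : segment ℝ y z ⊆ Metric.ball z ε := (convex_ball z ε).segment_subset
    (Metric.ball_subset_ball (min_le_left _ _) hy) (Metric.mem_ball_self hε)
  by_cases hyb : y ∈ P.boundary
  · exact ((convex_segment _ _).segment_subset (hball (hyz (left_mem_segment _ _ _)) hyb) hz).trans
      ((P.edge_subset_boundary k).trans P.boundary_subset_region)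
  refine P.segment_subset_region hyr fun x hx hxz hxb => hyb (P.edge_subset_boundary k ?_)
  have hline : y ∈ line[ℝ, P.vtx k, P.vtx (k + 1)] :=
    affineSpan_pair_le_of_mem_of_mem (mem_segment_iff_wbtw.mp hz).mem_affineSpan
      (mem_segment_iff_wbtw.mp (hball (hyz hx) hxb)).mem_affineSpan
      ((mem_segment_iff_wbtw.mp hx).left_mem_affineSpan_of_right_ne hxz.symm)
  rw [Metric.mem_ball, lt_min_iff, lt_min_iff] at hy
  exact mem_segment_of_mem_affineSpan_pair hz hline hy.2.1 hy.2.2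

theorem eventually_segment_subset_region {z : E2} (hz : z ∈ P.region) (hzv : z ∉ range P.vtx) :
    ∀ᶠ y in 𝓝 z, y ∈ P.region → segment ℝ y z ⊆ P.region := by
  by_cases hzb : z ∈ P.boundary
  · obtain ⟨k, hk⟩ := P.mem_boundary_iff.mp hzb
    exact P.eventually_segment_subset_region_of_mem_edge hk hzv
  obtain ⟨ε, hε, hball⟩ := Metric.isOpen_iff.mp P.isOpen_region_diff_boundary z ⟨hz, hzb⟩
  filter_upwards [Metric.ball_mem_nhds z hε] with y hy _
  exact ((convex_ball z ε).segment_subset hy (Metric.mem_ball_self hε)).trans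
    fun x hx => (hball hx).1

theorem mem_connectedComponentIn_of_mem_pocketOfSeg {S : Set E2} {x u : E2}
    (hx : x ∈ P.pocketOfSeg S u) (hxS : x ∈ P.region \ S) :
    x ∈ connectedComponentIn (P.region \ S) u :=
  hx.elim (mem_connectedComponentIn_of_mem_closure hxS) fun h => absurd h hxS.2

end SimplePolygon

namespace SimplePolygon.Cut

variable {P : SimplePolygon} (C : P.Cut)

theorem i_ne_j : C.i ≠ C.j := by
  rcases C.adj with h | h <;> rw [h] <;> intro hc
  · exact P.one_ne_zero (by linear_combination -hc)
  · exact P.one_ne_zero (by linear_combination hc)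

theorem v_ne_u : C.v ≠ C.u := fun h => C.i_ne_j (P.inj h)

theorem w_eq : C.w = C.v + C.t • (C.v - C.u) := rfl

theorem w_ne_v : C.w ≠ C.v := by
  rw [w_eq, Ne, add_eq_left, smul_eq_zero, not_or]
  exact ⟨C.t_pos.ne', sub_ne_zero.mpr C.v_ne_u⟩

theorem seg_infinite : C.seg.Infinite := segment_infinite C.w_ne_v.symm

theorem isPreconnected_seg : IsPreconnected C.seg := (convex_segment _ _).isPreconnected

theorem seg_subset_region : C.seg ⊆ P.region := C.inside

theorem seg_subset_pocket : C.seg ⊆ C.pocket := subset_union_right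

theorem v_mem_seg : C.v ∈ C.seg := left_mem_segment _ _ _

theorem segment_u_v_subset_boundary : segment ℝ C.u C.v ⊆ P.boundary := by
  rcases C.adj with h | h
  · rw [segment_symm, u, v, h]
    exact P.edge_subset_boundary C.i
  · have := P.edge_subset_boundary (C.i - 1)
    rwa [edge, sub_add_cancel, ← h] at this

theorem eq_v_of_mem_seg_of_mem_segment_u_v {x : E2} (hx : x ∈ C.seg)
    (hx' : x ∈ segment ℝ C.u C.v) : x = C.v := by
  rw [seg, segment_eq_image'] at hx
  obtain ⟨θ, ⟨hθ, -⟩, rfl⟩ := hx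
  rw [segment_eq_image'] at hx'
  obtain ⟨r, ⟨-, hr⟩, hx'⟩ := hx'
  have h : (r - 1 - θ * C.t) • (C.v - C.u) = 0 := by
    rw [w_eq] at hx'
    linear_combination (norm := module) hx'
  have hθt : θ * C.t = 0 := by
    have := (smul_eq_zero.mp h).resolve_right (sub_ne_zero.mpr C.v_ne_u)
    nlinarith [mul_nonneg hθ C.t_pos.le]
  show C.v + θ • (C.w - C.v) = C.v
  rw [w_eq, add_sub_cancel_left, smul_smul, hθt, zero_smul, add_zero]

theorem v_mem_closure_connectedComponentIn :
    C.v ∈ closure (connectedComponentIn (P.region \ C.seg) C.u) := by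
  have hT : segment ℝ C.u C.v \ {C.v} ⊆ P.region \ C.seg := fun x ⟨hx, hxv⟩ =>
    ⟨P.boundary_subset_region (C.segment_u_v_subset_boundary hx),
      fun hxs => hxv (C.eq_v_of_mem_seg_of_mem_segment_u_v hxs hx)⟩
  have hsub := (isPreconnected_segment_diff_right C.u C.v).subset_connectedComponentIn
    ⟨left_mem_segment _ _ _, C.v_ne_u.symm⟩ hT
  exact closure_mono hsub
    (segment_subset_closure_segment_diff_right C.v_ne_u.symm (right_mem_segment _ _ _))

theorem notMem_connectedComponentIn_of_mem_core (hC : C.Nonredundant) {z : E2}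
    (hz : z ∈ P.core) (hzv : z ∉ range P.vtx) :
    z ∉ connectedComponentIn (P.region \ C.seg) C.u := by
  -- `z` is a limit of points of `P` outside every pocket; one close enough to `z` sees `z`
  -- without crossing `C`, so it would lie in the pocket component of `C` as well.
  intro hzM
  have hzs : z ∉ C.seg := (connectedComponentIn_subset _ _ hzM).2
  obtain ⟨ε, hε, hball⟩ := Metric.mem_nhds_iff.mp
    ((P.eventually_segment_subset_region (P.core_subset_region hz) hzv).and
      ((isClosed_segment C.v C.w).isOpen_compl.mem_nhds hzs))
  obtain ⟨y, ⟨hyr, hyU⟩, hyz⟩ := Metric.mem_closure_iff.mp hz ε hε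
  have hy : y ∈ Metric.ball z ε := by rwa [Metric.mem_ball, dist_comm]
  have hseg : segment ℝ y z ⊆ P.region \ C.seg := fun x hx =>
    ⟨(hball hy).1 hyr hx,
      (hball ((convex_ball z ε).segment_subset hy (Metric.mem_ball_self hε) hx)).2⟩
  have hyM := (convex_segment y z).isPreconnected.subset_connectedComponentIn_of_mem
    (right_mem_segment _ _ _) hseg hzM (left_mem_segment _ _ _)
  exact hyU (mem_iUnion.mpr ⟨⟨C, hC⟩, Or.inl (subset_closure hyM)⟩)

theorem disjoint_connectedComponentIn_of_subset_core (hC : C.Nonredundant) {S : Set E2}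
    (hpre : IsPreconnected S) (hinf : S.Infinite) (hS : S ⊆ P.core) (hdisj : Disjoint C.seg S) :
    Disjoint (connectedComponentIn (P.region \ C.seg) C.u) S := by
  refine disjoint_left.mpr fun z₀ hz₀M hz₀S => ?_
  have hSM : S ⊆ connectedComponentIn (P.region \ C.seg) C.u :=
    hpre.subset_connectedComponentIn_of_mem hz₀S
      (fun x hx => ⟨P.core_subset_region (hS hx), disjoint_right.mp hdisj hx⟩) hz₀M
  obtain ⟨z, hzS, hzv⟩ := (hinf.sdiff (finite_range P.vtx)).nonempty
  exact C.notMem_connectedComponentIn_of_mem_core hC (hS hzS) hzv (hSM hzS)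

theorem pocket_subset_pocketOfSeg {S : Set E2} {x : E2}
    (hdisj : Disjoint (connectedComponentIn (P.region \ C.seg) C.u) S)
    (hseg : C.seg ⊆ connectedComponentIn (P.region \ S) x) : C.pocket ⊆ P.pocketOfSeg S x := by
  have hM := (isPreconnected_connectedComponentIn.insert_of_mem_closure
    C.v_mem_closure_connectedComponentIn).subset_connectedComponentIn_of_mem (mem_insert _ _)
    (insert_subset (connectedComponentIn_subset _ _ (hseg C.v_mem_seg))
      fun y hy => ⟨(connectedComponentIn_subset _ _ hy).1, disjoint_left.mp hdisj hy⟩)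
    (hseg C.v_mem_seg)
  exact union_subset ((closure_mono ((subset_insert _ _).trans hM)).trans subset_union_left)
    (hseg.trans (subset_closure.trans subset_union_left))

end SimplePolygon.Cut

/-- Let `Q = P.core` be realized as a simple polygon `R`, let `Pth`
be a connected curve inside `P` intersecting every nonredundant cut of `P`, and let
`C'` be a cut of `R`.  If the segment `C'` intersects no nonredundant cut of `P`,
some nonredundant cut of `P` has its pocket inside the pocket (in `P`) of `C'`, and
some nonredundant cut of `P` has its pocket not inside it, then `Pth` intersects the
segment `C'`. -/
theorem path_crosses_core_cut
    (P : SimplePolygon) (R : SimplePolygon) (hR : R.region = P.core)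
    (Pth : Set E2) (hsub : Pth ⊆ P.region) (hconn : IsConnected Pth)
    (hcuts : ∀ C : P.Cut, C.Nonredundant → (Pth ∩ C.seg).Nonempty)
    (C' : R.Cut)
    (hmiss : ∀ C : P.Cut, C.Nonredundant → C.seg ∩ C'.seg = ∅)
    (hin : ∃ C : P.Cut, C.Nonredundant ∧ C.pocket ⊆ P.pocketOfSeg C'.seg C'.u)
    (hout : ∃ C : P.Cut, C.Nonredundant ∧ ¬ C.pocket ⊆ P.pocketOfSeg C'.seg C'.u) :
    (Pth ∩ C'.seg).Nonempty := by
  by_contra hPthC'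
  have hPth : Pth ⊆ P.region \ C'.seg := fun x hx =>
    ⟨hsub hx, fun hx' => hPthC' ⟨x, hx, hx'⟩⟩
  have hdisj (C : P.Cut) (hC : C.Nonredundant) : Disjoint C.seg C'.seg :=
    disjoint_iff_inter_eq_empty.mpr (hmiss C hC)
  obtain ⟨Cin, hCin, hinsub⟩ := hin
  obtain ⟨Cout, hCout, houtsub⟩ := hout
  obtain ⟨p, hpPth, hpCin⟩ := hcuts Cin hCin
  have hpK : p ∈ connectedComponentIn (P.region \ C'.seg) C'.u :=
    P.mem_connectedComponentIn_of_mem_pocketOfSeg (hinsub (Cin.seg_subset_pocket hpCin))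
      (hPth hpPth)
  have hPthK := hconn.isPreconnected.subset_connectedComponentIn_of_mem hpPth hPth hpK
  obtain ⟨q, hqPth, hqCout⟩ := hcuts Cout hCout
  have hCoutK : Cout.seg ⊆ connectedComponentIn (P.region \ C'.seg) C'.u :=
    Cout.isPreconnected_seg.subset_connectedComponentIn_of_mem hqCout
      (fun x hx => ⟨Cout.seg_subset_region hx, disjoint_left.mp (hdisj Cout hCout) hx⟩)
      (hPthK hqPth)
  have hC'core : C'.seg ⊆ P.core := hR ▸ C'.seg_subset_region
  have hMC' := Cout.disjoint_connectedComponentIn_of_subset_core hCout C'.isPreconnected_seg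
    C'.seg_infinite hC'core (hdisj Cout hCout)
  exact houtsub (Cout.pocket_subset_pocketOfSeg hMC' hCoutK)
end
end
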